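/- Vandermonde-type convolution for generalized Stirling numbers: for non-negative n and k = k1 + k2, (k!/(k1!·k2!)) · S(n,k)(a,b; r1+r2) = Σ_{n1+n2=n, n1≥k1, n2≥k2} (n!/(n1!·n2!)) · S(n1,k1)(a,b;r1) · S(n2,k2)(a,b;r2). -/

import Mathlib

/-- Stirling subset numbers (Stirling numbers of the second kind). -/
def stirling2 : ℕ → ℕ → ℕ
  | 0, 0 => 1
  | 0, _+1 => 0
  | _+1, 0 => 0
  | n+1, k+1 => (k+1) * stirling2 n (k+1) + stirling2 n k

/-- Generalized Stirling numbers of Hsu and Shiue, S(n,k)(a,b;r). -/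
def gS (a b r : ℚ) : ℕ → ℕ → ℚ
  | 0, 0 => 1
  | 0, _+1 => 0
  | n+1, 0 => (-a * n + r) * gS a b r n 0
  | n+1, k+1 => (-a * n + b * (k+1) + r) * gS a b r n (k+1) + gS a b r n k

lemma gS_eq_zero_of_lt (a b r : ℚ) : ∀ n k, n < k → gS a b r n k = 0 := by
  intro n
  induction n with
  | zero => intro k hk; obtain ⟨m, rfl⟩ := Nat.exists_eq_add_of_lt hk; simp [gS]
  | succ n ih =>
    intro k hk
    obtain ⟨m, rfl⟩ : ∃ m, k = m + 1 := ⟨k - 1, by omega⟩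
    rw [gS, ih (m+1) (by omega), ih m (by omega)]
    ring

lemma gS_succ (a b r : ℚ) (n k : ℕ) :
    gS a b r (n+1) k = (-a * n + b * k + r) * gS a b r n k +
      (if k = 0 then 0 else gS a b r n (k-1)) := by
  match k with
  | 0 => rw [gS]; simp
  | k+1 => rw [gS]; simp

lemma key (a b r1 r2 : ℚ) : ∀ n k1 k2 : ℕ,
    (((k1+k2).choose k1 : ℕ) : ℚ) * gS a b (r1+r2) n (k1+k2) =
      ∑ i ∈ Finset.range (n+1),
        ((n.choose i : ℕ) : ℚ) * (gS a b r1 i k1 * gS a b r2 (n-i) k2) := by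
  intro n
  induction n with
  | zero =>
    intro k1 k2
    match k1, k2 with
    | 0, 0 => simp [gS]
    | k1+1, k2 => simp [gS, show k1 + 1 + k2 = (k1 + k2) + 1 by omega]
    | 0, k2+1 => simp [gS]
  | succ n ih =>
    intro k1 k2
    have split : (∑ i ∈ Finset.range (n+1+1),
          (((n+1).choose i : ℕ) : ℚ) * (gS a b r1 i k1 * gS a b r2 (n+1-i) k2)) =
        (∑ i ∈ Finset.range (n+1),
          ((n.choose i : ℕ) : ℚ) * (gS a b r1 i k1 * gS a b r2 (n+1-i) k2)) +
        ∑ i ∈ Finset.range (n+1),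
          ((n.choose i : ℕ) : ℚ) * (gS a b r1 (i+1) k1 * gS a b r2 (n-i) k2) :=
      Finset.sum_choose_succ_mul (fun i j => gS a b r1 i k1 * gS a b r2 j k2) n
    rw [split, ← Finset.sum_add_distrib]
    have h3 : ∀ i ∈ Finset.range (n+1),
        ((n.choose i : ℕ) : ℚ) * (gS a b r1 i k1 * gS a b r2 (n+1-i) k2)
          + ((n.choose i : ℕ) : ℚ) * (gS a b r1 (i+1) k1 * gS a b r2 (n-i) k2)
        = (-a * n + b * (k1+k2) + (r1+r2)) *
            (((n.choose i : ℕ) : ℚ) * (gS a b r1 i k1 * gS a b r2 (n-i) k2))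
          + (if k2 = 0 then 0 else
              ((n.choose i : ℕ) : ℚ) * (gS a b r1 i k1 * gS a b r2 (n-i) (k2-1)))
          + (if k1 = 0 then 0 else
              ((n.choose i : ℕ) : ℚ) * (gS a b r1 i (k1-1) * gS a b r2 (n-i) k2)) := by
      intro i hi
      have hin : i ≤ n := by simpa [Nat.lt_succ_iff] using hi
      have hni : n + 1 - i = (n - i) + 1 := by omega
      have hcast : ((n - i : ℕ) : ℚ) = (n : ℚ) - (i : ℚ) := by
        push_cast [hin]; ring
      rw [hni, gS_succ a b r2 (n-i) k2, gS_succ a b r1 i k1, hcast]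
      split_ifs <;> push_cast <;> ring
    rw [Finset.sum_congr rfl h3]
    simp only [Finset.sum_add_distrib, ← Finset.mul_sum]
    rw [← ih k1 k2]
    have hif2 : (∑ i ∈ Finset.range (n+1),
        (if k2 = 0 then 0 else
          ((n.choose i : ℕ) : ℚ) * (gS a b r1 i k1 * gS a b r2 (n-i) (k2-1))))
        = if k2 = 0 then 0 else
            (((k1+(k2-1)).choose k1 : ℕ) : ℚ) * gS a b (r1+r2) n (k1+(k2-1)) := by
      split_ifs with h
      · simp
      · rw [ih k1 (k2-1)]
    have hif1 : (∑ i ∈ Finset.range (n+1),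
        (if k1 = 0 then 0 else
          ((n.choose i : ℕ) : ℚ) * (gS a b r1 i (k1-1) * gS a b r2 (n-i) k2)))
        = if k1 = 0 then 0 else
            ((((k1-1)+k2).choose (k1-1) : ℕ) : ℚ) * gS a b (r1+r2) n ((k1-1)+k2) := by
      split_ifs with h
      · simp
      · rw [ih (k1-1) k2]
    rw [hif2, hif1, gS_succ a b (r1+r2) n (k1+k2)]
    match k1, k2 with
    | 0, 0 => simp [gS] <;> ring
    | 0, k2+1 => simp only [if_neg (Nat.succ_ne_zero k2), if_pos rfl]; simp <;> ring
    | k1+1, 0 => simp only [if_neg (Nat.succ_ne_zero k1), if_pos rfl]; simp <;> ring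
    | k1+1, k2+1 =>
      simp only [if_neg (Nat.succ_ne_zero k1), if_neg (Nat.succ_ne_zero k2),
        Nat.succ_sub_one]
      have e1 : k1 + 1 + (k2 + 1) = (k1 + 1 + k2) + 1 := by omega
      have e2 : k1 + (k2 + 1) = k1 + 1 + k2 := by omega
      rw [e1, Nat.choose_succ_succ, e2, Nat.succ_sub_one]
      push_cast
      ring

theorem gS_convolution (a b r1 r2 : ℚ) (n k k1 k2 : ℕ) (hk : k = k1 + k2) :
    ((Nat.factorial k : ℚ) / ((Nat.factorial k1 : ℚ) * (Nat.factorial k2 : ℚ))) *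
        gS a b (r1 + r2) n k =
      ∑ n1 ∈ Finset.range (n+1),
        if k1 ≤ n1 ∧ k2 ≤ n - n1 then
          ((Nat.factorial n : ℚ) /
              ((Nat.factorial n1 : ℚ) * (Nat.factorial (n - n1) : ℚ))) *
            gS a b r1 n1 k1 * gS a b r2 (n - n1) k2
        else 0 := by
  subst hk
  have hfac : ((Nat.factorial (k1+k2) : ℚ) / ((Nat.factorial k1 : ℚ) * (Nat.factorial k2 : ℚ)))
      = (((k1+k2).choose k1 : ℕ) : ℚ) := by
    rw [Nat.cast_choose ℚ (Nat.le_add_right k1 k2), Nat.add_sub_cancel_left]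
  rw [hfac, key]
  refine Finset.sum_congr rfl fun i hi => ?_
  have hin : i ≤ n := by simpa [Nat.lt_succ_iff] using hi
  by_cases h : k1 ≤ i ∧ k2 ≤ n - i
  · rw [if_pos h, Nat.cast_choose ℚ hin]; ring
  · rw [if_neg h]
    rcases not_and_or.mp h with h' | h'
    · rw [gS_eq_zero_of_lt a b r1 i k1 (by omega)]; ring
    · rw [gS_eq_zero_of_lt a b r2 (n-i) k2 (by omega)]; ring
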